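/- arXiv:math/0509360 — 5 statements merged into one kernel-verified Lean document; each statement's English description precedes it below -/
import Mathlib

section
/- Let (S_j)_{j=0}^{N-1} be a representation of the Cuntz algebra 𝒪_N on H, let f ∈ H with ‖f‖ = 1 satisfy S_j^* f = λ_j f for all j = 0, …, N−1 with λ_j ∈ ℂ, and let μ be a spectral measure of f on [0,1). Then μ = ∑_{j=0}^{N−1} |λ_j|² · (μ ∘ σ_j^{−1}), where μ ∘ σ_j^{−1} denotes the pushforward of μ under σ_j, i.e. (μ ∘ σ_j^{−1})(E) = μ({x : σ_j(x) ∈ E}) for Borel sets E ⊆ [0,1). -/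
/-!
For an eigenvector `f`, `S_α^* f = λ_{α 0} S_{tail α}^* f`, so the spectral measure satisfies
`μ(I(α)) = |λ_{α 0}|² μ(I(tail α))`. Since `σ_j⁻¹(I(α))` is `I(tail α)` translated by the integer
`α 0 - j`, and `μ` lives on `[0,1)`, the pushforward `μ ∘ σ_j⁻¹` charges `I(α)` only for
`j = α 0`, so `∑_j |λ_j|² μ ∘ σ_j⁻¹` obeys the same recursion; on `[0,1)` itself both sides have mass
`∑_j ‖S_j^* f‖² = ‖f‖²`. Two finite measures on `[0,1)` agreeing on all `N`-adic intervals are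
equal, because the cells `{x | ⌊x N^k⌋ = p}` form a π-system generating the Borel sets.
-/

open MeasureTheory ContinuousLinearMap
open scoped InnerProductSpace

variable {H : Type*} [NormedAddCommGroup H] [InnerProductSpace ℂ H] [CompleteSpace H]

/-- The word operator `S_α = S_{α 1} ⋯ S_{α k}` associated to a multi-index
`α ∈ {0,…,N-1}^k`. -/
noncomputable def Sw {N : ℕ} (S : Fin N → H →L[ℂ] H) {k : ℕ} (α : Fin k → Fin N) :
    H →L[ℂ] H :=
  (List.ofFn fun i => S (α i)).prod

/-- A family `S_0, …, S_{N-1}` of bounded operators is a representation of the Cuntz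
algebra `𝒪_N` if `S_j^* S_k = δ_{jk} I` and `∑ j, S_j S_j^* = I`. -/
def CuntzRep {N : ℕ} (S : Fin N → H →L[ℂ] H) : Prop :=
  (∀ j k : Fin N, adjoint (S j) ∘L S k = if j = k then 1 else 0) ∧
    ∑ j : Fin N, S j ∘L adjoint (S j) = 1

/-- `x_k(α) = α_1/N + α_2/N² + ⋯ + α_k/N^k`. -/
noncomputable def xk (N : ℕ) {k : ℕ} (α : Fin k → Fin N) : ℝ :=
  ∑ i : Fin k, (α i : ℝ) / (N : ℝ) ^ ((i : ℕ) + 1)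

/-- The `N`-adic interval `I_k(α) = [x_k(α), x_k(α) + N^{-k})`. -/
noncomputable def Ik (N : ℕ) {k : ℕ} (α : Fin k → Fin N) : Set ℝ :=
  Set.Ico (xk N α) (xk N α + ((N : ℝ) ^ k)⁻¹)

/-- A Borel measure `μ` on `[0,1)` is a spectral measure of `g` if `μ([0,1)) = ‖g‖²`
and `μ(I_k(α)) = ‖S_α^* g‖²` for every `k ≥ 1` and multi-index `α`. -/
def IsSpectralMeasureR {N : ℕ} (S : Fin N → H →L[ℂ] H) (g : H) (μ : Measure ℝ) : Prop :=
  μ (Set.Ico (0:ℝ) 1)ᶜ = 0 ∧ μ Set.univ = ENNReal.ofReal (‖g‖ ^ 2) ∧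
    ∀ k : ℕ, 1 ≤ k → ∀ α : Fin k → Fin N,
      μ (Ik N α) = ENNReal.ofReal (‖adjoint (Sw S α) g‖ ^ 2)

open Set

section NAdic

variable {N : ℕ}

lemma xk_succ {k : ℕ} (α : Fin (k + 1) → Fin N) :
    xk N α = ((α 0 : ℝ) + xk N (Fin.tail α)) / N := by
  simp only [xk, Fin.sum_univ_succ, add_div, Finset.sum_div, Fin.tail]
  congr 1
  · simp
  · refine Finset.sum_congr rfl fun i _ => ?_
    rw [Fin.val_succ, pow_succ, div_div, mul_comm]

lemma xk_nonneg {k : ℕ} (α : Fin k → Fin N) : 0 ≤ xk N α :=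
  Finset.sum_nonneg fun _ _ => by positivity

lemma xk_add_inv_pow_le_one (hN : 0 < N) {k : ℕ} (α : Fin k → Fin N) :
    xk N α + ((N : ℝ) ^ k)⁻¹ ≤ 1 := by
  induction k with
  | zero => simp [xk]
  | succ k ih =>
    have hNR : (0 : ℝ) < N := by exact_mod_cast hN
    have hα0 : (α 0 : ℝ) + 1 ≤ N := by exact_mod_cast (α 0).isLt
    rw [xk_succ, pow_succ, mul_inv, ← div_eq_mul_inv, ← add_div, div_le_one hNR]
    linarith [ih (Fin.tail α)]

lemma Ik_subset_Ico (hN : 0 < N) {k : ℕ} (α : Fin k → Fin N) : Ik N α ⊆ Ico 0 1 :=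
  Ico_subset_Ico (xk_nonneg α) (xk_add_inv_pow_le_one hN α)

lemma measurableSet_Ik {k : ℕ} (α : Fin k → Fin N) : MeasurableSet (Ik N α) :=
  measurableSet_Ico

lemma Ik_zero (α : Fin 0 → Fin N) : Ik N α = Ico 0 1 := by
  simp [Ik, xk]

lemma exists_xk_eq (hN : 0 < N) {k n : ℕ} (hn : n < N ^ k) :
    ∃ α : Fin k → Fin N, xk N α = n / (N : ℝ) ^ k := by
  induction k generalizing n with
  | zero => exact ⟨finZeroElim, by simp_all [xk]⟩
  | succ k ih =>
    have hpow : 0 < N ^ k := pow_pos hN k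
    obtain ⟨β, hβ⟩ := ih (Nat.mod_lt n hpow)
    have hd : n / N ^ k < N := Nat.div_lt_of_lt_mul (by rwa [← pow_succ])
    refine ⟨Fin.cons ⟨n / N ^ k, hd⟩ β, ?_⟩
    have hn : (n : ℝ) = (N : ℝ) ^ k * (n / N ^ k : ℕ) + (n % N ^ k : ℕ) := by
      exact_mod_cast (Nat.div_add_mod n (N ^ k)).symm
    have hNR : (N : ℝ) ≠ 0 := by positivity
    rw [xk_succ, Fin.tail_cons, hβ, hn, Fin.cons_zero]
    field_simp
    ring

end NAdic

section NAdicCells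

variable {N : ℕ}

/-- Unlike the intervals `Ik`, these cells cover all of `ℝ`. -/
def nadicCells (N : ℕ) : Set (Set ℝ) :=
  {s | ∃ (k : ℕ) (p : ℤ), (fun x : ℝ => ⌊x * (N : ℝ) ^ k⌋) ⁻¹' {p} = s}

lemma preimage_floor_mul_pow (hN : 0 < N) (k : ℕ) (p : ℤ) :
    (fun x : ℝ => ⌊x * (N : ℝ) ^ k⌋) ⁻¹' {p} = Ico (p / (N : ℝ) ^ k) ((p + 1) / (N : ℝ) ^ k) := by
  have hNk : (0 : ℝ) < (N : ℝ) ^ k := by positivity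
  ext x
  simp only [mem_preimage, mem_singleton_iff, Int.floor_eq_iff, mem_Ico, div_le_iff₀ hNk,
    lt_div_iff₀ hNk]

lemma exists_Ik_eq_preimage_floor (hN : 0 < N) {k n : ℕ} (hn : n < N ^ k) :
    ∃ α : Fin k → Fin N, Ik N α = (fun x : ℝ => ⌊x * (N : ℝ) ^ k⌋) ⁻¹' {(n : ℤ)} := by
  obtain ⟨α, hα⟩ := exists_xk_eq hN hn
  refine ⟨α, ?_⟩
  rw [preimage_floor_mul_pow hN, Ik, hα, add_div, one_div]
  push_cast
  rfl

lemma floor_mul_pow_eq_ediv (hN : 0 < N) {k l : ℕ} (hkl : k ≤ l) (x : ℝ) :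
    ⌊x * (N : ℝ) ^ k⌋ = ⌊x * (N : ℝ) ^ l⌋ / ((N ^ (l - k) : ℕ) : ℤ) := by
  obtain ⟨d, rfl⟩ := Nat.exists_eq_add_of_le hkl
  have hNd : (N : ℝ) ^ d ≠ 0 := by positivity
  rw [← Int.floor_div_natCast, Nat.add_sub_cancel_left]
  push_cast
  rw [pow_add, ← mul_assoc, mul_div_cancel_right₀ _ hNd]

lemma isPiSystem_nadicCells (hN : 0 < N) : IsPiSystem (nadicCells N) := by
  suffices nested : ∀ {k l : ℕ} (p q : ℤ) (x : ℝ), k ≤ l → ⌊x * (N : ℝ) ^ k⌋ = p →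
      ⌊x * (N : ℝ) ^ l⌋ = q → (fun x : ℝ => ⌊x * (N : ℝ) ^ l⌋) ⁻¹' {q} ⊆
        (fun x : ℝ => ⌊x * (N : ℝ) ^ k⌋) ⁻¹' {p} by
    rintro _ ⟨k, p, rfl⟩ _ ⟨l, q, rfl⟩ ⟨x, hxp, hxq⟩
    rcases le_total k l with hkl | hlk
    · exact ⟨l, q, (inter_eq_right.2 (nested p q x hkl hxp hxq)).symm⟩
    · exact ⟨k, p, (inter_eq_left.2 (nested q p x hlk hxq hxp)).symm⟩
  intro k l p q x hkl hxp hxq y hyq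
  simp only [mem_preimage, mem_singleton_iff] at hyq ⊢
  rw [floor_mul_pow_eq_ediv hN hkl, hyq, ← hxq, ← floor_mul_pow_eq_ediv hN hkl, hxp]

lemma borel_eq_generateFrom_nadicCells (hN : 2 ≤ N) :
    borel ℝ = MeasurableSpace.generateFrom (nadicCells N) := by
  refine le_antisymm ?_ (MeasurableSpace.generateFrom_le ?_)
  · rw [borel_eq_generateFrom_Iio]
    refine MeasurableSpace.generateFrom_le ?_
    rintro _ ⟨t, rfl⟩
    have hfloor : ∀ k : ℕ, Measurable[MeasurableSpace.generateFrom (nadicCells N)]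
        fun x : ℝ => ⌊x * (N : ℝ) ^ k⌋ := fun k =>
      @measurable_to_countable' ℤ ℝ _ _ (MeasurableSpace.generateFrom _) _ fun p =>
        MeasurableSpace.measurableSet_generateFrom ⟨k, p, rfl⟩
    have hIio : Iio t = ⋃ k : ℕ,
        (fun x : ℝ => ⌊x * (N : ℝ) ^ k⌋) ⁻¹' {p : ℤ | (p + 1 : ℝ) ≤ t * (N : ℝ) ^ k} := by
      ext x
      simp only [mem_Iio, mem_iUnion, mem_preimage, mem_ofPred_eq]
      constructor
      · intro hxt
        have hN1 : (1 : ℝ) < N := by exact_mod_cast hN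
        obtain ⟨k, hk⟩ := exists_pow_lt_of_lt_one (sub_pos.2 hxt) (inv_lt_one_of_one_lt₀ hN1)
        have hNk : (0 : ℝ) < (N : ℝ) ^ k := by positivity
        have hgap := mul_lt_mul_of_pos_right hk hNk
        rw [inv_pow, inv_mul_cancel₀ hNk.ne'] at hgap
        exact ⟨k, by linarith [Int.floor_le (x * (N : ℝ) ^ k)]⟩
      · rintro ⟨k, hk⟩
        have hNk : (0 : ℝ) < (N : ℝ) ^ k := by positivity
        exact lt_of_mul_lt_mul_right (by linarith [Int.lt_floor_add_one (x * (N : ℝ) ^ k)])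
          hNk.le
    rw [hIio]
    exact MeasurableSet.iUnion fun k => hfloor k .of_discrete
  · rintro _ ⟨k, p, rfl⟩
    exact (measurable_id.mul_const _).floor (measurableSet_singleton p)

theorem Measure.ext_of_measure_Ik (hN : 2 ≤ N) {μ ν : Measure ℝ} [IsFiniteMeasure μ]
    (hμ : μ (Ico 0 1)ᶜ = 0) (hν : ν (Ico 0 1)ᶜ = 0)
    (h : ∀ (k : ℕ) (α : Fin k → Fin N), μ (Ik N α) = ν (Ik N α)) : μ = ν := by
  have hN0 : 0 < N := by omega
  refine ext_of_generate_finite _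
    (BorelSpace.measurable_eq.trans (borel_eq_generateFrom_nadicCells hN))
    (isPiSystem_nadicCells hN0) ?_ ?_
  · rintro _ ⟨k, p, rfl⟩
    by_cases hp : 0 ≤ p ∧ p < (N : ℤ) ^ k
    · lift p to ℕ using hp.1
      obtain ⟨α, hα⟩ := exists_Ik_eq_preimage_floor hN0 (k := k) (by exact_mod_cast hp.2)
      rw [← hα, h]
    · have hout : (fun x : ℝ => ⌊x * (N : ℝ) ^ k⌋) ⁻¹' {p} ⊆ (Ico 0 1)ᶜ := by
        rintro x rfl ⟨hx0, hx1⟩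
        refine hp ⟨Int.floor_nonneg.2 (by positivity), Int.floor_lt.2 ?_⟩
        push_cast
        exact mul_lt_of_lt_one_left (by positivity) hx1
      rw [measure_mono_null hout hμ, measure_mono_null hout hν]
  · rw [← measure_congr (ae_eq_univ.2 hμ), ← measure_congr (ae_eq_univ.2 hν),
      ← Ik_zero (N := N) finZeroElim, h]

end NAdicCells

section Pushforward

variable {N : ℕ}

lemma preimage_Ik_succ (hN : 0 < N) (c : ℝ) {k : ℕ} (α : Fin (k + 1) → Fin N) :
    (fun x : ℝ => (x + c) / N) ⁻¹' Ik N α = (fun x => x + (c - α 0)) ⁻¹' Ik N (Fin.tail α) := by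
  have hNR : (0 : ℝ) < N := by exact_mod_cast hN
  have hIk : Ik N α = Ico ((α 0 + xk N (Fin.tail α)) / N)
      ((α 0 + (xk N (Fin.tail α) + ((N : ℝ) ^ k)⁻¹)) / N) := by
    rw [Ik, xk_succ, pow_succ, mul_inv, ← div_eq_mul_inv, ← add_div, add_assoc]
  ext x
  rw [mem_preimage, hIk, mem_preimage, Ik]
  simp only [mem_Ico, div_le_div_iff_of_pos_right hNR, div_lt_div_iff_of_pos_right hNR]
  constructor <;> rintro ⟨h₁, h₂⟩ <;> constructor <;> linarith

lemma map_apply_Ik_succ (hN : 0 < N) {μ : Measure ℝ} (hμ : μ (Ico 0 1)ᶜ = 0) (j : Fin N)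
    {k : ℕ} (α : Fin (k + 1) → Fin N) :
    μ.map (fun x : ℝ => (x + j) / N) (Ik N α) = if j = α 0 then μ (Ik N (Fin.tail α)) else 0 := by
  rw [Measure.map_apply (by fun_prop) (measurableSet_Ik α), preimage_Ik_succ hN]
  split_ifs with hj
  · simp [hj]
  · refine measure_mono_null ?_ hμ
    rintro x hx ⟨hx0, hx1⟩
    obtain ⟨hy0, hy1⟩ := Ik_subset_Ico hN _ hx
    rcases lt_or_gt_of_ne (Fin.val_ne_of_ne hj) with hlt | hgt
    · have : (j : ℝ) + 1 ≤ α 0 := by exact_mod_cast hlt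
      linarith
    · have : (α 0 : ℝ) + 1 ≤ j := by exact_mod_cast hgt
      linarith

lemma map_compl_Ico_eq_zero (hN : 0 < N) {μ : Measure ℝ} (hμ : μ (Ico 0 1)ᶜ = 0) (j : Fin N) :
    μ.map (fun x : ℝ => (x + j) / N) (Ico 0 1)ᶜ = 0 := by
  have hNR : (0 : ℝ) < N := by exact_mod_cast hN
  have hj : (j : ℝ) + 1 ≤ N := by exact_mod_cast j.isLt
  rw [Measure.map_apply (by fun_prop) measurableSet_Ico.compl, preimage_compl]
  refine measure_mono_null (compl_subset_compl.2 ?_) hμ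
  rintro x ⟨hx0, hx1⟩
  rw [mem_preimage, mem_Ico, le_div_iff₀ hNR, div_lt_iff₀ hNR]
  constructor <;> linarith

end Pushforward

section Cuntz

variable {N : ℕ} {S : Fin N → H →L[ℂ] H}

lemma Sw_zero {E : Type*} [NormedAddCommGroup E] [InnerProductSpace ℂ E] (S : Fin N → E →L[ℂ] E)
    (α : Fin 0 → Fin N) : Sw S α = 1 := by
  simp [Sw]

lemma Sw_succ {E : Type*} [NormedAddCommGroup E] [InnerProductSpace ℂ E] (S : Fin N → E →L[ℂ] E)
    {k : ℕ} (α : Fin (k + 1) → Fin N) :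
    Sw S α = S (α 0) ∘L Sw S (Fin.tail α) := by
  rw [Sw, List.ofFn_succ, List.prod_cons]
  rfl

lemma sum_norm_adjoint_apply_sq (hS : ∑ j : Fin N, S j ∘L adjoint (S j) = 1) (g : H) :
    ∑ j : Fin N, ‖adjoint (S j) g‖ ^ 2 = ‖g‖ ^ 2 := by
  have h : ∑ j : Fin N, ⟪adjoint (S j) g, adjoint (S j) g⟫_ℂ = ⟪g, g⟫_ℂ := by
    simp_rw [adjoint_inner_right, ← sum_inner, ← comp_apply, ← sum_apply, hS, one_apply_eq_self]
  simp_rw [inner_self_eq_norm_sq_to_K] at h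
  exact_mod_cast h

lemma IsSpectralMeasureR.measure_Ik {g : H} {μ : Measure ℝ} (hμ : IsSpectralMeasureR S g μ)
    {k : ℕ} (α : Fin k → Fin N) : μ (Ik N α) = ENNReal.ofReal (‖adjoint (Sw S α) g‖ ^ 2) := by
  rcases k.eq_zero_or_pos with rfl | hk
  · rw [Ik_zero, measure_congr (ae_eq_univ.2 hμ.1), hμ.2.1, Sw_zero, adjoint_one, one_apply_eq_self]
  · exact hμ.2.2 k hk α

lemma IsSpectralMeasureR.measure_Ik_succ {g : H} {μ : Measure ℝ} (hμ : IsSpectralMeasureR S g μ)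
    {lam : Fin N → ℂ} (heig : ∀ j : Fin N, adjoint (S j) g = lam j • g) {k : ℕ}
    (α : Fin (k + 1) → Fin N) :
    μ (Ik N α) = ENNReal.ofReal (‖lam (α 0)‖ ^ 2) * μ (Ik N (Fin.tail α)) := by
  rw [hμ.measure_Ik, hμ.measure_Ik, Sw_succ, adjoint_comp, comp_apply, heig, map_smul,
    norm_smul, mul_pow, ENNReal.ofReal_mul (by positivity)]

end Cuntz

theorem stmt_1_general {N : ℕ} (hN : 2 ≤ N) (S : Fin N → H →L[ℂ] H) (hS : CuntzRep S)
    (f : H) (lam : Fin N → ℂ)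
    (heig : ∀ j : Fin N, adjoint (S j) f = lam j • f)
    (μ : Measure ℝ) (hμ : IsSpectralMeasureR S f μ) :
    μ = ∑ j : Fin N,
      ENNReal.ofReal (‖lam j‖ ^ 2) • Measure.map (fun x : ℝ => (x + (j : ℝ)) / N) μ := by
  have hN0 : 0 < N := by omega
  have : IsFiniteMeasure μ := ⟨by rw [hμ.2.1]; exact ENNReal.ofReal_lt_top⟩
  set ν := ∑ j : Fin N,
    ENNReal.ofReal (‖lam j‖ ^ 2) • Measure.map (fun x : ℝ => (x + (j : ℝ)) / N) μ
  have hν_null : ν (Ico 0 1)ᶜ = 0 := by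
    simp [ν, Measure.finsetSum_apply, map_compl_Ico_eq_zero hN0 hμ.1]
  have hν_univ : ν univ = μ univ := by
    rw [Measure.finsetSum_apply, hμ.2.1, ← sum_norm_adjoint_apply_sq hS.2 f,
      ENNReal.ofReal_sum_of_nonneg fun _ _ => by positivity]
    refine Finset.sum_congr rfl fun j _ => ?_
    rw [Measure.smul_apply, Measure.map_apply (by fun_prop) .univ, preimage_univ, hμ.2.1, heig,
      norm_smul, mul_pow, ENNReal.ofReal_mul (by positivity), smul_eq_mul]
  refine Measure.ext_of_measure_Ik hN hμ.1 hν_null fun k α => ?_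
  rcases k with _ | k
  · rw [Ik_zero, measure_congr (ae_eq_univ.2 hμ.1), measure_congr (ae_eq_univ.2 hν_null),
      hν_univ]
  · simp [ν, hμ.measure_Ik_succ heig, Measure.finsetSum_apply, map_apply_Ik_succ hN0 hμ.1]

/-- If `(S_j)` is a representation of `𝒪_N`, `‖f‖ = 1`, `S_j^* f = λ_j f` for all `j`,
and `μ` is a spectral measure of `f` on `[0,1)`, then
`μ = ∑_j |λ_j|² · (μ ∘ σ_j⁻¹)` where `σ_j(x) = (x+j)/N`. -/
theorem stmt_1 {N : ℕ} (hN : 2 ≤ N) (S : Fin N → H →L[ℂ] H) (hS : CuntzRep S)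
    (f : H) (hf : ‖f‖ = 1) (lam : Fin N → ℂ)
    (heig : ∀ j : Fin N, adjoint (S j) f = lam j • f)
    (μ : Measure ℝ) (hμ : IsSpectralMeasureR S f μ) :
    μ = ∑ j : Fin N,
      ENNReal.ofReal (‖lam j‖ ^ 2) • Measure.map (fun x : ℝ => (x + (j : ℝ)) / N) μ :=
  stmt_1_general hN S hS f lam heig μ hμ
end

section
/- Let (S_j)_{j=0}^{N-1} be a representation of the Cuntz algebra 𝒪_N on H, and let (σ_i)_{i=0}^{N-1} be a complete and non-overlapping iterated function system on a compact metric space X. Let f ∈ H, let μ_f be a spectral measure of f, and for each j = 0, …, N−1 let ν_j be a spectral measure of S_j^* f. Then ∑_{j=0}^{N−1} ν_j ∘ σ_j^{−1} = μ_f, where ν_j ∘ σ_j^{−1} is the pushforward of ν_j under σ_j; equivalently, ∑_{j=0}^{N−1} ∫_X ψ(σ_j(x)) dν_j(x) = ∫_X ψ dμ_f for every bounded Borel function ψ : X → ℂ. -/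
open MeasureTheory ContinuousLinearMap
open scoped InnerProductSpace

variable {H : Type*} [NormedAddCommGroup H] [InnerProductSpace ℂ H] [CompleteSpace H]
variable {X : Type*} [MetricSpace X] [CompactSpace X] [MeasurableSpace X] [BorelSpace X]

/-- The composition `σ_{i_1} ∘ ⋯ ∘ σ_{i_k}` for a multi-index `i`. -/
def compIFS {N : ℕ} (σ : Fin N → X → X) {k : ℕ} (i : Fin k → Fin N) : X → X :=
  (List.ofFn fun j => σ (i j)).foldr (· ∘ ·) id

/-- `A_k(i) = σ_{i_1} ∘ ⋯ ∘ σ_{i_k}(X)`. -/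
def Ak {N : ℕ} (σ : Fin N → X → X) {k : ℕ} (i : Fin k → Fin N) : Set X :=
  Set.range (compIFS σ i)

/-- The IFS is complete if the diameters of `A_k(i_1,…,i_k)` tend to `0` along every
infinite word `(i_1, i_2, …)`. -/
def CompleteIFS {N : ℕ} (σ : Fin N → X → X) : Prop :=
  ∀ s : ℕ → Fin N,
    Filter.Tendsto (fun k : ℕ => Metric.diam (Ak σ fun j : Fin k => s j))
      Filter.atTop (nhds 0)

/-- The IFS is non-overlapping if for each `k` the sets `A_k(i)` are pairwise disjoint. -/
def NonOverlapping {N : ℕ} (σ : Fin N → X → X) : Prop :=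
  ∀ k : ℕ, ∀ i i' : Fin k → Fin N, i ≠ i' → Disjoint (Ak σ i) (Ak σ i')

/-- A Borel measure `μ` on `X` is a spectral measure of `g` if `μ(X) = ‖g‖²`
and `μ(A_k(i)) = ‖S_i^* g‖²` for every `k ≥ 1` and multi-index `i`. -/
def IsSpectralMeasureX {N : ℕ} (S : Fin N → H →L[ℂ] H) (σ : Fin N → X → X) (g : H)
    (μ : Measure X) : Prop :=
  μ Set.univ = ENNReal.ofReal (‖g‖ ^ 2) ∧
    ∀ k : ℕ, 1 ≤ k → ∀ i : Fin k → Fin N,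
      μ (Ak σ i) = ENNReal.ofReal (‖adjoint (Sw S i) g‖ ^ 2)


/-!
Put `μ = ∑ j, (ν j).map (σ j)`. Since `σ j` maps `A(i)` onto `A(j i)`,
`μ (A(j i)) ≥ ν j (A(i)) = ‖S_i^* S_j^* f‖² = μ_f (A(j i))`. The Cuntz relation gives
`∑ i, ‖S_i^* f‖² = ‖f‖²` over the words of any fixed length, so `μ` and `μ_f` have the same mass
and the disjoint cylinders of each level carry all of it; hence the inequality is an equality on
every cylinder. By completeness, up to a null set every open set is an increasing union of finite
unions of cylinders, so the two finite measures agree on open sets and therefore coincide.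
-/

variable {N : ℕ}

section Words

variable {α : Type*} (σ : Fin N → α → α)

lemma compIFS_cons {k : ℕ} (j : Fin N) (i : Fin k → Fin N) :
    compIFS σ (Fin.cons j i) = σ j ∘ compIFS σ i := by
  simp only [compIFS, List.ofFn_succ, Fin.cons_zero, Fin.cons_succ, List.foldr_cons]

lemma compIFS_snoc {k : ℕ} (i : Fin k → Fin N) (j : Fin N) :
    compIFS σ (Fin.snoc i j) = compIFS σ i ∘ σ j := by
  induction k with
  | zero => rfl
  | succ k ih =>
    rw [← Fin.cons_self_tail i, ← Fin.cons_snoc_eq_snoc_cons, compIFS_cons, compIFS_cons, ih]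
    rfl

lemma Ak_of_isEmpty (i : Fin 0 → Fin N) : Ak σ i = Set.univ := by
  simp [Ak, compIFS]

lemma Ak_cons {k : ℕ} (j : Fin N) (i : Fin k → Fin N) :
    Ak σ (Fin.cons j i) = σ j '' Ak σ i := by
  rw [Ak, Ak, compIFS_cons, Set.range_comp]

lemma Ak_subset_Ak_init {k : ℕ} (i : Fin (k + 1) → Fin N) : Ak σ i ⊆ Ak σ (Fin.init i) := by
  conv_lhs => rw [← Fin.snoc_init_self i]
  rw [Ak, compIFS_snoc]
  exact Set.range_comp_subset_range _ _

lemma Ak_subset_Ak_castLE {k n : ℕ} (h : k ≤ n) (i : Fin n → Fin N) :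
    Ak σ i ⊆ Ak σ (fun j : Fin k => i (Fin.castLE h j)) := by
  induction n, h using Nat.le_induction with
  | base => simp only [Fin.castLE_refl, subset_refl]
  | succ n hkn ih => exact (Ak_subset_Ak_init σ i).trans (ih (Fin.init i))

variable {σ}

lemma NonOverlapping.eq_castLE_of_mem_Ak (hno : NonOverlapping σ) {k n : ℕ} (h : k ≤ n)
    {i : Fin k → Fin N} {i' : Fin n → Fin N} {x : α} (hx : x ∈ Ak σ i) (hx' : x ∈ Ak σ i') :
    i = fun j => i' (Fin.castLE h j) := by
  by_contra hne
  exact Set.disjoint_left.mp (hno k _ _ hne) hx (Ak_subset_Ak_castLE σ h i' hx')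

variable [TopologicalSpace α] [CompactSpace α]

lemma isCompact_Ak (hcont : ∀ j, Continuous (σ j)) {k : ℕ} (i : Fin k → Fin N) :
    IsCompact (Ak σ i) := by
  refine isCompact_range ?_
  induction k with
  | zero => exact continuous_id
  | succ k ih => rw [← Fin.cons_self_tail i, compIFS_cons]; exact (hcont _).comp (ih _)

lemma measurableSet_Ak [T2Space α] [MeasurableSpace α] [OpensMeasurableSpace α]
    (hcont : ∀ j, Continuous (σ j)) {k : ℕ} (i : Fin k → Fin N) : MeasurableSet (Ak σ i) :=
  (isCompact_Ak hcont i).isClosed.measurableSet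

end Words

section Cuntz

variable {E : Type*} [NormedAddCommGroup E] [InnerProductSpace ℂ E]
  (S : Fin N → E →L[ℂ] E)

lemma Sw_of_isEmpty (i : Fin 0 → Fin N) : Sw S i = 1 := by
  simp [Sw]

variable [CompleteSpace E]

lemma adjoint_Sw_cons_apply {k : ℕ} (j : Fin N) (i : Fin k → Fin N) (g : E) :
    adjoint (Sw S (Fin.cons j i)) g = adjoint (Sw S i) (adjoint (S j) g) := by
  simp only [Sw, List.ofFn_succ, Fin.cons_zero, Fin.cons_succ, List.prod_cons, mul_def,
    adjoint_comp, comp_apply]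

variable {S}

lemma CuntzRep.sum_norm_adjoint_sq (hS : CuntzRep S) (g : E) :
    ∑ j, ‖adjoint (S j) g‖ ^ 2 = ‖g‖ ^ 2 := by
  have h := congrArg (fun T : E →L[ℂ] E => RCLike.re ⟪T g, g⟫_ℂ) hS.2
  simp only [sum_apply, one_apply_eq_self, sum_inner, map_sum] at h
  simp_rw [apply_norm_sq_eq_inner_adjoint_left, adjoint_adjoint, h, inner_self_eq_norm_sq]

lemma CuntzRep.sum_norm_adjoint_Sw_sq (hS : CuntzRep S) (k : ℕ) (g : E) :
    ∑ i : Fin k → Fin N, ‖adjoint (Sw S i) g‖ ^ 2 = ‖g‖ ^ 2 := by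
  induction k generalizing g with
  | zero => simp [Sw_of_isEmpty, adjoint_one]
  | succ k ih =>
    rw [← (Fin.consEquiv fun _ => Fin N).sum_comp, Fintype.sum_prod_type]
    simp only [Fin.consEquiv, Equiv.coe_fn_mk, adjoint_Sw_cons_apply, ih]
    exact hS.sum_norm_adjoint_sq g

end Cuntz

section Cylinders

variable {α : Type*} (σ : Fin N → α → α)

def AkUnion (k : ℕ) : Set α := ⋃ i : Fin k → Fin N, Ak σ i

def AkUnionInside (U : Set α) (n : ℕ) : Set α := ⋃ i ∈ {i : Fin n → Fin N | Ak σ i ⊆ U}, Ak σ i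

variable {σ}

lemma NonOverlapping.exists_seq_forall_mem_Ak (hno : NonOverlapping σ) {x : α}
    (hx : ∀ k, x ∈ AkUnion σ k) : ∃ s : ℕ → Fin N, ∀ k, x ∈ Ak σ fun j : Fin k => s j := by
  choose w hw using fun k => Set.mem_iUnion.mp (hx k)
  refine ⟨fun j => w (j + 1) (Fin.last j), fun n => ?_⟩
  convert hw n using 2
  funext j
  exact (congrFun (hno.eq_castLE_of_mem_Ak j.isLt (hw (j + 1)) (hw n)) (Fin.last j)).trans rfl

lemma NonOverlapping.AkUnionInside_inter_subset (hno : NonOverlapping σ) (U : Set α) {k n : ℕ}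
    (h : k ≤ n) : AkUnionInside σ U k ∩ AkUnion σ n ⊆ AkUnionInside σ U n := by
  rintro x ⟨hxk, hxn⟩
  obtain ⟨i, hiU, hxi⟩ := Set.mem_iUnion₂.mp hxk
  obtain ⟨i', hxi'⟩ := Set.mem_iUnion.mp hxn
  have hprefix := hno.eq_castLE_of_mem_Ak h hxi hxi'
  refine Set.mem_iUnion₂.mpr ⟨i', ?_, hxi'⟩
  exact (Ak_subset_Ak_castLE σ h i').trans (hprefix ▸ hiU)

lemma CompleteIFS.exists_mem_AkUnionInside [MetricSpace α] [CompactSpace α]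
    (hcont : ∀ j, Continuous (σ j)) (hcomp : CompleteIFS σ) (hno : NonOverlapping σ)
    {U : Set α} (hU : IsOpen U) {x : α} (hxU : x ∈ U) (hx : ∀ k, x ∈ AkUnion σ k) :
    ∃ n, x ∈ AkUnionInside σ U n := by
  obtain ⟨s, hs⟩ := hno.exists_seq_forall_mem_Ak hx
  obtain ⟨ε, hε, hball⟩ := Metric.isOpen_iff.mp hU x hxU
  obtain ⟨n, hn⟩ := ((hcomp s).eventually (gt_mem_nhds hε)).exists
  refine ⟨n, Set.mem_iUnion₂.mpr ⟨_, fun y hy => hball ?_, hs n⟩⟩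
  exact (Metric.dist_le_diam_of_mem (isCompact_Ak hcont _).isBounded hy (hs n)).trans_lt hn

end Cylinders

open scoped ENNReal

lemma ENNReal.eq_of_le_of_sum_le {ι : Type*} {s : Finset ι} {f g : ι → ℝ≥0∞}
    (hfg : ∀ i ∈ s, f i ≤ g i) (hsum : ∑ i ∈ s, g i ≤ ∑ i ∈ s, f i) (hf : ∑ i ∈ s, f i ≠ ∞)
    {i : ι} (hi : i ∈ s) : f i = g i := by
  have hg : ∑ i ∈ s, g i ≠ ∞ := ne_top_of_le_ne_top hf hsum
  have hf' := ENNReal.sum_ne_top.mp hf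
  have hg' := ENNReal.sum_ne_top.mp hg
  have hsum_toReal : ∑ i ∈ s, (f i).toReal = ∑ i ∈ s, (g i).toReal := by
    rw [← ENNReal.toReal_sum hf', ← ENNReal.toReal_sum hg',
      le_antisymm (Finset.sum_le_sum hfg) hsum]
  have hle_toReal : ∀ i ∈ s, (f i).toReal ≤ (g i).toReal :=
    fun i hi => ENNReal.toReal_mono (hg' i hi) (hfg i hi)
  exact (ENNReal.toReal_eq_toReal_iff' (hf' i hi) (hg' i hi)).mp
    ((Finset.sum_eq_sum_iff_of_le hle_toReal).mp hsum_toReal i hi)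

section Measures

variable {α : Type*} [MeasurableSpace α] {σ : Fin N → α → α} {μ ρ : Measure α}

section Topological

variable [TopologicalSpace α] [CompactSpace α] [T2Space α] [OpensMeasurableSpace α]

lemma measurableSet_AkUnion (hcont : ∀ j, Continuous (σ j)) (k : ℕ) :
    MeasurableSet (AkUnion σ k) :=
  MeasurableSet.iUnion (measurableSet_Ak hcont)

lemma measure_AkUnion (hcont : ∀ j, Continuous (σ j)) (hno : NonOverlapping σ) (μ : Measure α)
    (k : ℕ) : μ (AkUnion σ k) = ∑ i : Fin k → Fin N, μ (Ak σ i) := by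
  rw [AkUnion, measure_iUnion (fun i i' hne => hno k i i' hne) (measurableSet_Ak hcont),
    tsum_fintype]

lemma measure_AkUnionInside_congr (hcont : ∀ j, Continuous (σ j)) (hno : NonOverlapping σ)
    {n : ℕ} (h : ∀ i : Fin n → Fin N, μ (Ak σ i) = ρ (Ak σ i)) (U : Set α) :
    μ (AkUnionInside σ U n) = ρ (AkUnionInside σ U n) := by
  have hdisj : Set.PairwiseDisjoint {i : Fin n → Fin N | Ak σ i ⊆ U} (Ak σ) :=
    fun i _ i' _ hne => hno n i i' hne
  have hmeas : ∀ i ∈ {i : Fin n → Fin N | Ak σ i ⊆ U}, MeasurableSet (Ak σ i) :=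
    fun i _ => measurableSet_Ak hcont i
  rw [AkUnionInside, measure_biUnion (Set.to_countable _) hdisj hmeas,
    measure_biUnion (Set.to_countable _) hdisj hmeas]
  exact tsum_congr fun i => h i

lemma measure_Ak_eq_of_le [IsFiniteMeasure μ] (hcont : ∀ j, Continuous (σ j))
    (hno : NonOverlapping σ) {k : ℕ} (hle : ∀ i : Fin k → Fin N, ρ (Ak σ i) ≤ μ (Ak σ i))
    (huniv : μ Set.univ ≤ ρ Set.univ) (hρ : ρ (AkUnion σ k)ᶜ = 0) (i : Fin k → Fin N) :
    μ (Ak σ i) = ρ (Ak σ i) := by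
  refine (ENNReal.eq_of_le_of_sum_le (fun i _ => hle i) ?_ ?_ (Finset.mem_univ i)).symm
  · calc ∑ i, μ (Ak σ i) = μ (AkUnion σ k) := (measure_AkUnion hcont hno μ k).symm
      _ ≤ ρ Set.univ := (measure_mono (Set.subset_univ _)).trans huniv
      _ = ∑ i, ρ (Ak σ i) := by
        rw [← measure_AkUnion hcont hno, measure_congr (ae_eq_univ.mpr hρ)]
  · refine ne_top_of_le_ne_top (measure_ne_top μ (AkUnion σ k)) ?_
    rw [measure_AkUnion hcont hno]
    exact Finset.sum_le_sum fun i _ => hle i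

end Topological

section Metric

variable [MetricSpace α] [CompactSpace α]

/-- Almost every point of `U` lies in a cylinder inside `U` (completeness), and almost everywhere
the sets `AkUnionInside σ U n` increase with `n` (non-overlapping). -/
lemma measure_isOpen_eq_iSup_AkUnionInside (hcont : ∀ j, Continuous (σ j))
    (hcomp : CompleteIFS σ) (hno : NonOverlapping σ) (hρ : ∀ k, ρ (AkUnion σ k)ᶜ = 0)
    {U : Set α} (hU : IsOpen U) : ρ U = ⨆ n, ρ (AkUnionInside σ U n) := by
  set Z := ⋂ k, AkUnion σ k
  have hZ : ρ Zᶜ = 0 := by rw [Set.compl_iInter]; exact measure_iUnion_null hρ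
  have hmono : Monotone fun n => AkUnionInside σ U n ∩ Z := fun k n h x hx =>
    ⟨hno.AkUnionInside_inter_subset U h ⟨hx.1, Set.mem_iInter.mp hx.2 n⟩, hx.2⟩
  have hcover : U ∩ Z = ⋃ n, AkUnionInside σ U n ∩ Z := by
    refine subset_antisymm (fun x hx => ?_) (Set.iUnion_subset fun n => ?_)
    · obtain ⟨n, hn⟩ := hcomp.exists_mem_AkUnionInside hcont hno hU hx.1 (Set.mem_iInter.mp hx.2)
      exact Set.mem_iUnion.mpr ⟨n, hn, hx.2⟩
    · exact Set.inter_subset_inter_left _ (Set.iUnion₂_subset fun i hi => hi)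
  calc ρ U = ρ (U ∩ Z) := (measure_inter_conull hZ).symm
    _ = ⨆ n, ρ (AkUnionInside σ U n ∩ Z) := by rw [hcover, hmono.measure_iUnion]
    _ = ⨆ n, ρ (AkUnionInside σ U n) := by simp_rw [measure_inter_conull hZ]

theorem ext_of_measure_Ak_eq [BorelSpace α] [IsFiniteMeasure μ] (hcont : ∀ j, Continuous (σ j))
    (hcomp : CompleteIFS σ) (hno : NonOverlapping σ)
    (h : ∀ k (i : Fin k → Fin N), μ (Ak σ i) = ρ (Ak σ i)) (hρ : ∀ k, ρ (AkUnion σ k)ᶜ = 0) :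
    μ = ρ := by
  have huniv : μ Set.univ = ρ Set.univ := by simpa [Ak_of_isEmpty] using h 0 Fin.elim0
  have hμ : ∀ k, μ (AkUnion σ k)ᶜ = 0 := fun k => by
    have hfin := measure_ne_top μ (AkUnion σ k)
    have hY : μ (AkUnion σ k) = ρ (AkUnion σ k) := by
      simp only [measure_AkUnion hcont hno, h k]
    rw [← hρ k, measure_compl (measurableSet_AkUnion hcont k) hfin,
      measure_compl (measurableSet_AkUnion hcont k) (hY ▸ hfin), huniv, hY]
  refine ext_of_generate_finite _ BorelSpace.measurable_eq isPiSystem_isOpen (fun U hU => ?_) huniv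
  rw [measure_isOpen_eq_iSup_AkUnionInside hcont hcomp hno hμ hU,
    measure_isOpen_eq_iSup_AkUnionInside hcont hcomp hno hρ hU]
  exact iSup_congr fun n => measure_AkUnionInside_congr hcont hno (h n) U

end Metric

end Measures

namespace IsSpectralMeasureX

variable {E : Type*} [NormedAddCommGroup E] [InnerProductSpace ℂ E] [CompleteSpace E]
  {α : Type*} [MeasurableSpace α] {S : Fin N → E →L[ℂ] E} {σ : Fin N → α → α} {g : E}
  {μ : Measure α}

lemma measure_Ak (hμ : IsSpectralMeasureX S σ g μ) {k : ℕ} (i : Fin k → Fin N) :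
    μ (Ak σ i) = ENNReal.ofReal (‖adjoint (Sw S i) g‖ ^ 2) := by
  cases k with
  | zero => simpa [Ak_of_isEmpty, Sw_of_isEmpty, adjoint_one] using hμ.1
  | succ k => exact hμ.2 (k + 1) k.succ_pos i

lemma isFiniteMeasure (hμ : IsSpectralMeasureX S σ g μ) : IsFiniteMeasure μ :=
  ⟨hμ.1 ▸ ENNReal.ofReal_lt_top⟩

lemma measure_compl_AkUnion [TopologicalSpace α] [CompactSpace α] [T2Space α]
    [OpensMeasurableSpace α] (hμ : IsSpectralMeasureX S σ g μ) (hS : CuntzRep S)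
    (hcont : ∀ j, Continuous (σ j)) (hno : NonOverlapping σ) (k : ℕ) :
    μ (AkUnion σ k)ᶜ = 0 := by
  have : IsFiniteMeasure μ := hμ.isFiniteMeasure
  have hfull : μ (AkUnion σ k) = μ Set.univ := by
    rw [measure_AkUnion hcont hno, Finset.sum_congr rfl fun i _ => hμ.measure_Ak i,
      ← ENNReal.ofReal_sum_of_nonneg fun i _ => sq_nonneg _, hS.sum_norm_adjoint_Sw_sq, hμ.1]
  rw [measure_compl (measurableSet_AkUnion hcont k) (measure_ne_top μ _), hfull, tsub_self]

lemma measure_Ak_cons_le_map {f : E} {ν : Measure α} (hμ : IsSpectralMeasureX S σ f μ)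
    {j : Fin N} (hν : IsSpectralMeasureX S σ (adjoint (S j) f) ν) (hσ : AEMeasurable (σ j) ν)
    {k : ℕ} (i : Fin k → Fin N) : μ (Ak σ (Fin.cons j i)) ≤ ν.map (σ j) (Ak σ (Fin.cons j i)) := by
  rw [hμ.measure_Ak, adjoint_Sw_cons_apply, ← hν.measure_Ak, Ak_cons]
  exact Measure.le_map_apply_image hσ _

end IsSpectralMeasureX

theorem stmt_3_general {N : ℕ} (S : Fin N → H →L[ℂ] H) (hS : CuntzRep S)
    (σ : Fin N → X → X) (hcont : ∀ i, Continuous (σ i))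
    (hcomp : CompleteIFS σ) (hno : NonOverlapping σ)
    (f : H) (μf : Measure X) (hμf : IsSpectralMeasureX S σ f μf)
    (ν : Fin N → Measure X)
    (hν : ∀ j : Fin N, IsSpectralMeasureX S σ (adjoint (S j) f) (ν j)) :
    ∑ j : Fin N, Measure.map (σ j) (ν j) = μf := by
  set μ := ∑ j : Fin N, Measure.map (σ j) (ν j)
  have hmass : μ Set.univ = μf Set.univ := by
    simp only [μ, Measure.coe_finsetSum, Finset.sum_apply,
      Measure.map_apply (hcont _).measurable MeasurableSet.univ, Set.preimage_univ]
    rw [Finset.sum_congr rfl fun j _ => (hν j).1, hμf.1,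
      ← ENNReal.ofReal_sum_of_nonneg fun j _ => sq_nonneg _, hS.sum_norm_adjoint_sq]
  have : IsFiniteMeasure μ := ⟨hmass ▸ hμf.isFiniteMeasure.measure_univ_lt_top⟩
  have hle : ∀ k (i : Fin k → Fin N), μf (Ak σ i) ≤ μ (Ak σ i)
    | 0, i => by simp only [Ak_of_isEmpty, hmass, le_refl]
    | k + 1, i => by
      rw [← Fin.cons_self_tail i]
      refine (hμf.measure_Ak_cons_le_map (hν _) (hcont _).aemeasurable _).trans ?_
      exact Measure.le_iff'.mp (Finset.single_le_sum (f := fun j => (ν j).map (σ j))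
        (fun j _ => Measure.zero_le _) (Finset.mem_univ _)) _
  have hnull := hμf.measure_compl_AkUnion hS hcont hno
  exact ext_of_measure_Ak_eq hcont hcomp hno
    (fun k => measure_Ak_eq_of_le hcont hno (hle k) hmass.le (hnull k)) hnull

/-- If `μ_f` is a spectral measure of `f` and `ν_j` is a spectral measure of `S_j^* f`
for each `j`, then `∑_j ν_j ∘ σ_j⁻¹ = μ_f`. -/
theorem stmt_3 {N : ℕ} (hN : 2 ≤ N) (S : Fin N → H →L[ℂ] H) (hS : CuntzRep S)
    (σ : Fin N → X → X) (hcont : ∀ i, Continuous (σ i))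
    (hcomp : CompleteIFS σ) (hno : NonOverlapping σ)
    (f : H) (μf : Measure X) (hμf : IsSpectralMeasureX S σ f μf)
    (ν : Fin N → Measure X)
    (hν : ∀ j : Fin N, IsSpectralMeasureX S σ (adjoint (S j) f) (ν j)) :
    ∑ j : Fin N, Measure.map (σ j) (ν j) = μf :=
  stmt_3_general S hS σ hcont hcomp hno f μf hμf ν hν
end

section
/- Let f₁, f₂ ∈ H be unit vectors and let μ₁ := μ_{f₁} and μ₂ := μ_{f₂} be the associated measures, with isometries V_{f₁} : L²(μ₁) → H and V_{f₂} : L²(μ₂) → H. Suppose μ₁ is absolutely continuous with respect to μ₂, and let h := dμ₁/dμ₂ be the Radon–Nikodym derivative. Then U : L²(μ₁) → L²(μ₂) defined by U ψ := √h · ψ is a linear isometry, and the operator W := V_{f₂} ∘ U ∘ V_{f₁}^* : H → H (where V_{f₁}^* denotes the Hilbert-space adjoint of V_{f₁}) commutes with ρ(ψ) for every ψ ∈ C(X, ℂ). -/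
open MeasureTheory ContinuousLinearMap
open scoped InnerProductSpace
open scoped ENNReal

/-!
Write `M_ψ` for multiplication by `ψ ∈ C(X, ℂ)` on `L²(μ)`. If `V (ψ) = ρ(ψ) f` on continuous
functions, then `V ∘ M_ψ = ρ(ψ) ∘ V`, since both sides agree on the continuous functions, which are
dense in `L²(μ)` for a finite weakly regular measure. Taking adjoints, and using `M_ψ^* = M_{ψ̄}` and
`ρ(ψ̄) = ρ(ψ)^*`, gives `V^* ∘ ρ(ψ) = M_ψ ∘ V^*`. Multiplication by `√h`, `h = dμ₁/dμ₂`, is an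
isometry `L²(μ₁) → L²(μ₂)` because `∫ h |g|² dμ₂ = ∫ |g|² dμ₁`, and it commutes with `M_ψ`.
Chaining the three intertwining relations shows that `V₂ ∘ √h ∘ V₁^*` commutes with `ρ(ψ)`.
-/

namespace ContinuousMap

variable {X : Type*} [TopologicalSpace X] [CompactSpace X] [MeasurableSpace X] [BorelSpace X]
  (μ : Measure X) [IsFiniteMeasure μ] (p : ℝ≥0∞) [Fact (1 ≤ p)]

noncomputable def mulLp (ψ : C(X, ℂ)) : Lp ℂ p μ →L[ℂ] Lp ℂ p μ :=
  (ContinuousLinearMap.mul ℂ ℂ).holderL μ ∞ p p (toLp ∞ μ ℂ ψ)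

variable {μ p}

lemma coeFn_mulLp (ψ : C(X, ℂ)) (g : Lp ℂ p μ) :
    (mulLp μ p ψ g : X → ℂ) =ᵐ[μ] fun x => ψ x * g x := by
  filter_upwards [(ContinuousLinearMap.mul ℂ ℂ).coeFn_holder (r := p) (toLp ∞ μ ℂ ψ) g,
    coeFn_toLp (p := ∞) (𝕜 := ℂ) μ ψ] with x hg hψ
  rw [mulLp, holderL_apply_apply, hg, hψ, mul_apply']

lemma mulLp_toLp (ψ φ : C(X, ℂ)) : mulLp μ p ψ (toLp p μ ℂ φ) = toLp p μ ℂ (ψ * φ) := by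
  refine Lp.ext ?_
  filter_upwards [coeFn_mulLp ψ (toLp p μ ℂ φ), coeFn_toLp (𝕜 := ℂ) (p := p) μ φ,
    coeFn_toLp (𝕜 := ℂ) (p := p) μ (ψ * φ)] with x h hφ hψφ
  rw [h, hφ, hψφ, mul_apply]

lemma adjoint_mulLp (ψ : C(X, ℂ)) : adjoint (mulLp μ 2 ψ) = mulLp μ 2 (star ψ) := by
  refine ((eq_adjoint_iff _ _).2 fun u g => ?_).symm
  rw [L2.inner_def, L2.inner_def]
  refine integral_congr_ae ?_
  filter_upwards [coeFn_mulLp (star ψ) u, coeFn_mulLp ψ g] with x hu hg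
  simp only [hu, hg, RCLike.inner_apply, star_apply, RCLike.star_def, map_mul, Complex.conj_conj]
  ring

end ContinuousMap

section Intertwining

open ContinuousMap

variable {X : Type*} [TopologicalSpace X] [CompactSpace X] [T2Space X] [MeasurableSpace X]
  [BorelSpace X] {μ : Measure X} [IsFiniteMeasure μ] [μ.WeaklyRegular]
  {H : Type*} [NormedAddCommGroup H] [InnerProductSpace ℂ H] [CompleteSpace H]
  (ρ : C(X, ℂ) →⋆ₐ[ℂ] (H →L[ℂ] H)) {f : H} {V : Lp ℂ 2 μ →L[ℂ] H}

lemma comp_mulLp_eq_comp (hV : ∀ φ, V (toLp 2 μ ℂ φ) = ρ φ f) (ψ : C(X, ℂ)) :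
    V ∘L mulLp μ 2 ψ = ρ ψ ∘L V := by
  have hdense : DenseRange (toLp 2 μ ℂ : C(X, ℂ) → Lp ℂ 2 μ) :=
    toLp_denseRange ℂ μ ℂ ENNReal.ofNat_ne_top
  refine DFunLike.coe_injective (hdense.equalizer (by fun_prop) (by fun_prop) (funext fun φ => ?_))
  simp only [Function.comp_apply, ContinuousLinearMap.comp_apply, mulLp_toLp, hV, map_mul,
    mul_apply_eq_comp]

lemma adjoint_comp_eq_mulLp_comp (hV : ∀ φ, V (toLp 2 μ ℂ φ) = ρ φ f) (ψ : C(X, ℂ)) :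
    adjoint V ∘L ρ ψ = mulLp μ 2 ψ ∘L adjoint V := by
  have h := congrArg adjoint (comp_mulLp_eq_comp ρ hV (star ψ))
  rwa [adjoint_comp, adjoint_comp, adjoint_mulLp, star_star, map_star, star_eq_adjoint,
    adjoint_adjoint, eq_comm] at h

end Intertwining

section DensityChange

variable {X : Type*} [MeasurableSpace X] {μ ν : Measure X}

noncomputable def sqrtRNDeriv (μ ν : Measure X) (x : X) : ℂ :=
  (√(μ.rnDeriv ν x).toReal : ℂ)

lemma measurable_sqrtRNDeriv : Measurable (sqrtRNDeriv μ ν) :=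
  Complex.measurable_ofReal.comp (μ.measurable_rnDeriv ν).ennreal_toReal.sqrt

lemma enorm_sqrtRNDeriv_mul_sq {x : X} (hx : μ.rnDeriv ν x < ∞) (z : ℂ) :
    ‖sqrtRNDeriv μ ν x * z‖ₑ ^ 2 = μ.rnDeriv ν x * ‖z‖ₑ ^ 2 := by
  rw [enorm_mul, mul_pow, sqrtRNDeriv, ← ofReal_norm, Complex.norm_real, Real.norm_eq_abs,
    abs_of_nonneg (Real.sqrt_nonneg _), ← ENNReal.ofReal_pow (Real.sqrt_nonneg _),
    Real.sq_sqrt ENNReal.toReal_nonneg, ENNReal.ofReal_toReal hx.ne]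

variable [μ.HaveLebesgueDecomposition ν]

lemma sqrtRNDeriv_mul_congr_ae (hμν : μ ≪ ν) {u v : X → ℂ} (huv : u =ᵐ[μ] v) :
    sqrtRNDeriv μ ν * u =ᵐ[ν] sqrtRNDeriv μ ν * v := by
  rw [← Measure.withDensity_rnDeriv_eq μ ν hμν, Filter.EventuallyEq,
    ae_withDensity_iff (μ.measurable_rnDeriv ν)] at huv
  filter_upwards [huv] with x hx
  -- `u = v` wherever `dμ/dν ≠ 0`, and the factor `√(dμ/dν)` kills the rest.
  by_cases h0 : μ.rnDeriv ν x = 0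
  · simp [sqrtRNDeriv, h0]
  · simp [hx h0]

variable [SigmaFinite μ]

lemma eLpNorm_sqrtRNDeriv_mul (hμν : μ ≪ ν) (u : X → ℂ) :
    eLpNorm (sqrtRNDeriv μ ν * u) 2 ν = eLpNorm u 2 μ := by
  simp only [eLpNorm_eq_lintegral_rpow_enorm_toReal two_ne_zero ENNReal.ofNat_ne_top,
    ENNReal.toReal_ofNat, ENNReal.rpow_two]
  congr 1
  conv_rhs => rw [← Measure.withDensity_rnDeriv_eq μ ν hμν]
  rw [lintegral_withDensity_eq_lintegral_mul_non_measurable _ (μ.measurable_rnDeriv ν)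
    (Measure.rnDeriv_lt_top μ ν)]
  refine lintegral_congr_ae ?_
  filter_upwards [Measure.rnDeriv_lt_top μ ν] with x hx
  exact enorm_sqrtRNDeriv_mul_sq hx (u x)

lemma MeasureTheory.MemLp.sqrtRNDeriv_mul (hμν : μ ≪ ν) {u : X → ℂ} (hu : MemLp u 2 μ) :
    MemLp (sqrtRNDeriv μ ν * u) 2 ν := by
  refine ⟨?_, by rw [eLpNorm_sqrtRNDeriv_mul hμν]; exact hu.2⟩
  -- `u` is only `μ`-a.e. measurable; pass through a measurable representative.
  exact (measurable_sqrtRNDeriv.aestronglyMeasurable.mul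
    hu.1.stronglyMeasurable_mk.aestronglyMeasurable).congr
    (sqrtRNDeriv_mul_congr_ae hμν hu.1.ae_eq_mk).symm

noncomputable def mulSqrtRNDeriv (hμν : μ ≪ ν) : Lp ℂ 2 μ →ₗᵢ[ℂ] Lp ℂ 2 ν where
  toFun g := ((Lp.memLp g).sqrtRNDeriv_mul hμν).toLp
  map_add' g₁ g₂ := by
    rw [← MemLp.toLp_add]
    refine MemLp.toLp_congr _ _ ?_
    filter_upwards [sqrtRNDeriv_mul_congr_ae hμν (Lp.coeFn_add g₁ g₂)] with x hx
    rw [hx, mul_add]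
  map_smul' c g := by
    rw [RingHom.id_apply, ← MemLp.toLp_const_smul]
    refine MemLp.toLp_congr _ _ ?_
    filter_upwards [sqrtRNDeriv_mul_congr_ae hμν (Lp.coeFn_smul c g)] with x hx
    simp only [Pi.mul_apply, Pi.smul_apply] at hx ⊢
    rw [hx, smul_eq_mul, smul_eq_mul, mul_left_comm]
  norm_map' g := by
    simp only [LinearMap.coe_mk, AddHom.coe_mk]
    rw [Lp.norm_toLp, eLpNorm_sqrtRNDeriv_mul hμν, Lp.norm_def]

lemma coeFn_mulSqrtRNDeriv (hμν : μ ≪ ν) (g : Lp ℂ 2 μ) :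
    mulSqrtRNDeriv hμν g =ᵐ[ν] sqrtRNDeriv μ ν * g :=
  MemLp.coeFn_toLp ((Lp.memLp g).sqrtRNDeriv_mul hμν)

end DensityChange

open ContinuousMap in
lemma mulSqrtRNDeriv_comp_mulLp {X : Type*} [TopologicalSpace X] [CompactSpace X]
    [MeasurableSpace X] [BorelSpace X] {μ ν : Measure X} [IsFiniteMeasure μ] [IsFiniteMeasure ν]
    (hμν : μ ≪ ν) (ψ : C(X, ℂ)) :
    (mulSqrtRNDeriv hμν).toContinuousLinearMap ∘L mulLp μ 2 ψ =
      mulLp ν 2 ψ ∘L (mulSqrtRNDeriv hμν).toContinuousLinearMap := by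
  ext1 g
  refine Lp.ext ?_
  filter_upwards [coeFn_mulSqrtRNDeriv hμν (mulLp μ 2 ψ g),
    sqrtRNDeriv_mul_congr_ae hμν (coeFn_mulLp ψ g), coeFn_mulLp ψ (mulSqrtRNDeriv hμν g),
    coeFn_mulSqrtRNDeriv hμν g] with x hUM hM hMU hU
  change (mulSqrtRNDeriv hμν (mulLp μ 2 ψ g) : X → ℂ) x = mulLp ν 2 ψ (mulSqrtRNDeriv hμν g) x
  rw [hUM, hM, hMU, hU]
  exact mul_left_comm _ _ _

theorem stmt_11_general {H : Type*} [NormedAddCommGroup H] [InnerProductSpace ℂ H]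
    [CompleteSpace H]
    {X : Type*} [TopologicalSpace X] [CompactSpace X] [T2Space X]
    [MeasurableSpace X] [BorelSpace X]
    (ρ : C(X, ℂ) →⋆ₐ[ℂ] (H →L[ℂ] H))
    (f₁ f₂ : H)
    (μ₁ μ₂ : Measure X)
    (hμ₁reg : μ₁.Regular) (hμ₁prob : IsProbabilityMeasure μ₁)
    (hμ₂reg : μ₂.Regular) (hμ₂prob : IsProbabilityMeasure μ₂)
    (V₁ : Lp ℂ 2 μ₁ →ₗᵢ[ℂ] H)
    (hV₁ : ∀ (ψ : C(X, ℂ)) (g : Lp ℂ 2 μ₁),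
      (g : X → ℂ) =ᵐ[μ₁] (ψ : X → ℂ) → V₁ g = ρ ψ f₁)
    (V₂ : Lp ℂ 2 μ₂ →ₗᵢ[ℂ] H)
    (hV₂ : ∀ (ψ : C(X, ℂ)) (g : Lp ℂ 2 μ₂),
      (g : X → ℂ) =ᵐ[μ₂] (ψ : X → ℂ) → V₂ g = ρ ψ f₂)
    (habs : μ₁ ≪ μ₂) :
    ∃ U : Lp ℂ 2 μ₁ →ₗᵢ[ℂ] Lp ℂ 2 μ₂,
      (∀ g : Lp ℂ 2 μ₁,
        (U g : X → ℂ) =ᵐ[μ₂]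
          fun x => (Real.sqrt ((μ₁.rnDeriv μ₂ x).toReal) : ℂ) * (g : X → ℂ) x) ∧
      ∀ ψ : C(X, ℂ),
        (V₂.toContinuousLinearMap ∘L U.toContinuousLinearMap ∘L
            adjoint V₁.toContinuousLinearMap) ∘L ρ ψ =
          ρ ψ ∘L (V₂.toContinuousLinearMap ∘L U.toContinuousLinearMap ∘L
            adjoint V₁.toContinuousLinearMap) := by
  have hV₁' (φ : C(X, ℂ)) : V₁ (φ.toLp 2 μ₁ ℂ) = ρ φ f₁ :=
    hV₁ φ _ (ContinuousMap.coeFn_toLp μ₁ φ)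
  have hV₂' (φ : C(X, ℂ)) : V₂ (φ.toLp 2 μ₂ ℂ) = ρ φ f₂ :=
    hV₂ φ _ (ContinuousMap.coeFn_toLp μ₂ φ)
  refine ⟨mulSqrtRNDeriv habs, coeFn_mulSqrtRNDeriv habs, fun ψ => ?_⟩
  set U := (mulSqrtRNDeriv habs).toContinuousLinearMap
  calc (V₂.toContinuousLinearMap ∘L U ∘L adjoint V₁.toContinuousLinearMap) ∘L ρ ψ
      = V₂.toContinuousLinearMap ∘L (U ∘L ψ.mulLp μ₁ 2) ∘L adjoint V₁.toContinuousLinearMap := by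
        rw [comp_assoc, comp_assoc, adjoint_comp_eq_mulLp_comp ρ hV₁' ψ, comp_assoc]
    _ = (V₂.toContinuousLinearMap ∘L ψ.mulLp μ₂ 2) ∘L U ∘L adjoint V₁.toContinuousLinearMap := by
        rw [mulSqrtRNDeriv_comp_mulLp, comp_assoc, comp_assoc]
    _ = ρ ψ ∘L (V₂.toContinuousLinearMap ∘L U ∘L adjoint V₁.toContinuousLinearMap) := by
        rw [comp_mulLp_eq_comp ρ hV₂' ψ, comp_assoc]

/-- Lemma 3.1(b): with `μ₁ = μ_{f₁} ≪ μ₂ = μ_{f₂}` and `h = dμ₁/dμ₂`, the map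
`U ψ = √h ψ` is an isometry `L²(μ₁) → L²(μ₂)`, and `W = V_{f₂} U V_{f₁}^*` commutes with
every `ρ(ψ)`. -/
theorem stmt_11 {H : Type*} [NormedAddCommGroup H] [InnerProductSpace ℂ H]
    [CompleteSpace H]
    {X : Type*} [TopologicalSpace X] [CompactSpace X] [T2Space X]
    [MeasurableSpace X] [BorelSpace X]
    (ρ : C(X, ℂ) →⋆ₐ[ℂ] (H →L[ℂ] H))
    (f₁ f₂ : H) (hf₁ : ‖f₁‖ = 1) (hf₂ : ‖f₂‖ = 1)
    (μ₁ μ₂ : Measure X)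
    (hμ₁reg : μ₁.Regular) (hμ₁prob : IsProbabilityMeasure μ₁)
    (hμ₁ : ∀ ψ : C(X, ℂ), ∫ x, ψ x ∂μ₁ = ⟪f₁, ρ ψ f₁⟫_ℂ)
    (hμ₂reg : μ₂.Regular) (hμ₂prob : IsProbabilityMeasure μ₂)
    (hμ₂ : ∀ ψ : C(X, ℂ), ∫ x, ψ x ∂μ₂ = ⟪f₂, ρ ψ f₂⟫_ℂ)
    (V₁ : Lp ℂ 2 μ₁ →ₗᵢ[ℂ] H)
    (hV₁ : ∀ (ψ : C(X, ℂ)) (g : Lp ℂ 2 μ₁),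
      (g : X → ℂ) =ᵐ[μ₁] (ψ : X → ℂ) → V₁ g = ρ ψ f₁)
    (V₂ : Lp ℂ 2 μ₂ →ₗᵢ[ℂ] H)
    (hV₂ : ∀ (ψ : C(X, ℂ)) (g : Lp ℂ 2 μ₂),
      (g : X → ℂ) =ᵐ[μ₂] (ψ : X → ℂ) → V₂ g = ρ ψ f₂)
    (habs : μ₁ ≪ μ₂) :
    ∃ U : Lp ℂ 2 μ₁ →ₗᵢ[ℂ] Lp ℂ 2 μ₂,
      (∀ g : Lp ℂ 2 μ₁,
        (U g : X → ℂ) =ᵐ[μ₂]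
          fun x => (Real.sqrt ((μ₁.rnDeriv μ₂ x).toReal) : ℂ) * (g : X → ℂ) x) ∧
      ∀ ψ : C(X, ℂ),
        (V₂.toContinuousLinearMap ∘L U.toContinuousLinearMap ∘L
            adjoint V₁.toContinuousLinearMap) ∘L ρ ψ =
          ρ ψ ∘L (V₂.toContinuousLinearMap ∘L U.toContinuousLinearMap ∘L
            adjoint V₁.toContinuousLinearMap) :=
  stmt_11_general ρ f₁ f₂ μ₁ μ₂ hμ₁reg hμ₁prob hμ₂reg hμ₂prob V₁ hV₁ V₂ hV₂ habs
end

section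
/- Let (S_j)_{j=0}^{N-1} be a representation of the Cuntz algebra 𝒪_N on H, let f ∈ H, and let i ≠ j in {0,…,N−1}. Then ⟨S_i f, A (S_j f)⟩ = 0 for every operator A in the von Neumann algebra 𝔄 generated by {S_α S_α^* : α a multi-index}; in particular the closures of 𝔄·(S_i f) and 𝔄·(S_j f) are mutually orthogonal subspaces of H. -/
open MeasureTheory ContinuousLinearMap
open scoped InnerProductSpace

variable {H : Type*} [NormedAddCommGroup H] [InnerProductSpace ℂ H] [CompleteSpace H]

/-- The set of projections `S_α S_α^*`, `α` a multi-index. -/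
noncomputable def projSet {N : ℕ} (S : Fin N → H →L[ℂ] H) : Set (H →L[ℂ] H) :=
  {A | ∃ k : ℕ, 1 ≤ k ∧ ∃ α : Fin k → Fin N, A = Sw S α ∘L adjoint (Sw S α)}

/-- The von Neumann algebra generated by the projections `S_α S_α^*`, realized as the
double commutant of that (self-adjoint) family. -/
noncomputable def vN {N : ℕ} (S : Fin N → H →L[ℂ] H) : Set (H →L[ℂ] H) :=
  Set.centralizer (Set.centralizer (projSet S))

lemma Sw_succ_s14 {N k : ℕ} (S : Fin N → H →L[ℂ] H) (α : Fin (k+1) → Fin N) :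
    Sw S α = S (α 0) * Sw S (fun i => α i.succ) := by
  unfold Sw
  rw [List.ofFn_succ, List.prod_cons]

lemma cuntz_mul {N : ℕ} {S : Fin N → H →L[ℂ] H} (hS : CuntzRep S) (j k : Fin N) :
    adjoint (S j) * S k = if j = k then 1 else 0 := hS.1 j k

lemma adjoint_mul (a b : H →L[ℂ] H) : adjoint (a * b) = adjoint b * adjoint a := by
  rw [← ContinuousLinearMap.star_eq_adjoint, star_mul]
  simp [ContinuousLinearMap.star_eq_adjoint]

lemma comm_helper {N : ℕ} {S : Fin N → H →L[ℂ] H} (hS : CuntzRep S)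
    (a j : Fin N) (T : H →L[ℂ] H) :
    (S a * T) * adjoint (S a * T) * (S j * adjoint (S j))
      = (S j * adjoint (S j)) * ((S a * T) * adjoint (S a * T)) := by
  rw [adjoint_mul]
  by_cases h : a = j
  · subst h
    have h1 : adjoint (S a) * S a = 1 := by simpa using cuntz_mul hS a a
    have e1 : ∀ X : H →L[ℂ] H, adjoint (S a) * (S a * X) = X := fun X => by
      rw [← mul_assoc, h1, one_mul]
    simp only [mul_assoc, e1]
  · have h1 : adjoint (S a) * S j = 0 := by simpa [h] using cuntz_mul hS a j
    have h2 : adjoint (S j) * S a = 0 := by simpa [Ne.symm h] using cuntz_mul hS j a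
    have e1 : ∀ X : H →L[ℂ] H, adjoint (S a) * (S j * X) = 0 := fun X => by
      rw [← mul_assoc, h1, zero_mul]
    have e2 : ∀ X : H →L[ℂ] H, adjoint (S j) * (S a * X) = 0 := fun X => by
      rw [← mul_assoc, h2, zero_mul]
    simp only [mul_assoc, e1, e2, mul_zero]

lemma Pj_comm {N : ℕ} {S : Fin N → H →L[ℂ] H} (hS : CuntzRep S) (j : Fin N) :
    (S j * adjoint (S j)) ∈ Set.centralizer (projSet S) := by
  intro B hB
  obtain ⟨k, hk, α, rfl⟩ := hB
  obtain ⟨m, rfl⟩ : ∃ m, k = m + 1 := ⟨k - 1, by omega⟩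
  rw [← ContinuousLinearMap.mul_def, Sw_succ_s14]
  exact comm_helper hS (α 0) j _

lemma projSet_star {N : ℕ} (S : Fin N → H →L[ℂ] H) {A : H →L[ℂ] H}
    (hA : A ∈ projSet S) : adjoint A ∈ projSet S := by
  obtain ⟨k, hk, α, rfl⟩ := hA
  refine ⟨k, hk, α, ?_⟩
  rw [← ContinuousLinearMap.mul_def, adjoint_mul, adjoint_adjoint]

lemma centralizer_star {s : Set (H →L[ℂ] H)} (hs : ∀ a ∈ s, adjoint a ∈ s)
    {c : H →L[ℂ] H} (hc : c ∈ Set.centralizer s) :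
    adjoint c ∈ Set.centralizer s := by
  intro a ha
  have h := congrArg adjoint (hc _ (hs a ha))
  rw [adjoint_mul, adjoint_mul, adjoint_adjoint] at h
  exact h.symm

lemma vN_star {N : ℕ} (S : Fin N → H →L[ℂ] H) {A : H →L[ℂ] H}
    (hA : A ∈ vN S) : adjoint A ∈ vN S :=
  centralizer_star (fun _ hc => centralizer_star (fun _ ha => projSet_star S ha) hc) hA


/-- For `i ≠ j`, `⟨S_i f, A S_j f⟩ = 0` for every `A ∈ 𝔄`; in particular the closures of
`𝔄 S_i f` and `𝔄 S_j f` are mutually orthogonal. -/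
theorem stmt_14 {N : ℕ} (hN : 2 ≤ N) (S : Fin N → H →L[ℂ] H) (hS : CuntzRep S)
    (f : H) (i j : Fin N) (hij : i ≠ j) :
    (∀ A ∈ vN S, ⟪S i f, A (S j f)⟫_ℂ = 0) ∧
      ∀ x ∈ closure ((fun A : H →L[ℂ] H => A (S i f)) '' vN S),
        ∀ y ∈ closure ((fun A : H →L[ℂ] H => A (S j f)) '' vN S),
          ⟪x, y⟫_ℂ = 0 := by
  have key : ∀ A ∈ vN S, ⟪S i f, A (S j f)⟫_ℂ = 0 := by
    intro A hA
    set P : H →L[ℂ] H := S j * adjoint (S j) with hP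
    have hcomm : P * A = A * P := hA _ (Pj_comm hS j)
    have h1 : adjoint (S j) * S j = 1 := by simpa using cuntz_mul hS j j
    have hPSj : P (S j f) = S j f := by
      have h3 : P * S j = S j := by rw [hP, mul_assoc, h1, mul_one]
      calc P (S j f) = (P * S j) f := (ContinuousLinearMap.mul_apply P (S j) f).symm
        _ = S j f := by rw [h3]
    have hASj : A (S j f) = P (A (S j f)) := by
      conv_lhs => rw [← hPSj]
      calc A (P (S j f)) = (A * P) (S j f) := (ContinuousLinearMap.mul_apply A P _).symm
        _ = (P * A) (S j f) := by rw [hcomm]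
        _ = P (A (S j f)) := ContinuousLinearMap.mul_apply P A _
    have hPadj : adjoint P = P := by
      rw [hP, adjoint_mul, adjoint_adjoint]
    have hPSi : P (S i f) = 0 := by
      have h0 : adjoint (S j) * S i = 0 := by simpa [hij.symm] using cuntz_mul hS j i
      have h3 : P * S i = 0 := by rw [hP, mul_assoc, h0, mul_zero]
      calc P (S i f) = (P * S i) f := (ContinuousLinearMap.mul_apply P (S i) f).symm
        _ = 0 := by rw [h3]; rfl
    rw [hASj, ← ContinuousLinearMap.adjoint_inner_left, hPadj, hPSi, inner_zero_left]
  refine ⟨key, ?_⟩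
  have base : ∀ x ∈ ((fun A : H →L[ℂ] H => A (S i f)) '' vN S),
      ∀ y ∈ ((fun A : H →L[ℂ] H => A (S j f)) '' vN S), ⟪x, y⟫_ℂ = 0 := by
    rintro _ ⟨A, hA, rfl⟩ _ ⟨B, hB, rfl⟩
    have hAB : (adjoint A * B) ∈ vN S :=
      Set.mul_mem_centralizer (vN_star S hA) hB
    have h := key _ hAB
    rw [ContinuousLinearMap.mul_apply, ← ContinuousLinearMap.adjoint_inner_left,
      adjoint_adjoint] at h
    exact h
  intro x hx y hy
  have hx' : ∀ y ∈ ((fun A : H →L[ℂ] H => A (S j f)) '' vN S), ⟪x, y⟫_ℂ = 0 := by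
    intro y hy
    have hclosed : IsClosed {z : H | ⟪z, y⟫_ℂ = 0} :=
      isClosed_eq (continuous_id.inner continuous_const) continuous_const
    exact hclosed.closure_subset_iff.mpr (fun z hz => base z hz y hy) hx
  have hclosed : IsClosed {z : H | ⟪x, z⟫_ℂ = 0} :=
    isClosed_eq (continuous_const.inner continuous_id) continuous_const
  exact hclosed.closure_subset_iff.mpr hx' hy
end

section
/- Let N ≥ 2 and let m_0, …, m_{N−1} : 𝕋 → ℂ be essentially bounded measurable functions such that for almost every x ∈ 𝕋 the N×N complex matrix ((1/√N) · m_j(x + k/N))_{j,k=0}^{N−1} is unitary. Define S_j : L²(𝕋) → L²(𝕋) by (S_j f)(x) = m_j(x) · f(N x). Then each S_j is a bounded operator, indeed an isometry, and the family (S_j)_{j=0}^{N−1} satisfies the Cuntz relations: S_j^* S_k = δ_{jk}·I for all j, k, and ∑_{j=0}^{N−1} S_j S_j^* = I. -/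
/-!
Everything rests on averaging over the `N`-torsion translates `x + l/N`: Haar measure is
invariant under them and `x ↦ N x` does not see them, so
`∫ φ(x) ψ(N x) = ∫ (N⁻¹ ∑ₗ φ(x + l/N)) ψ(N x)`. For `φ = conj m_j * m_k` the orthonormality of the
rows of the filter matrix makes the bracket `δ_jk`, which gives `⟪S_j f, S_k g⟫ = δ_jk ⟪f, g⟫`.
For `∑ S_j S_j^* = 1` it remains to see that `h ⊥ range S_j` for all `j` forces `h = 0`. Testing
against `S_j e_q` kills the Fourier coefficients of `w_j = conj m_j * h` at multiples of `N`;
periodizing over the torsion translates multiplies the `n`-th coefficient by `∑ₗ e_n(l/N)`,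
which vanishes unless `N ∣ n`, so the periodizations of all `w_j` vanish. At almost every `x`
they are the entries of `(h(x + l/N))ₗ` times the adjoint of the unitary filter matrix, so `h = 0`.
-/

open MeasureTheory ContinuousLinearMap AddCircle
open scoped InnerProductSpace

variable {H : Type*} [NormedAddCommGroup H] [InnerProductSpace ℂ H] [CompleteSpace H]

open ComplexConjugate

section Cuntz

variable {ι : Type*} [DecidableEq ι] (S : ι → H →L[ℂ] H)

theorem adjoint_comp_eq_ite_of_inner
    (horth : ∀ j k f g, ⟪S j f, S k g⟫_ℂ = if j = k then ⟪f, g⟫_ℂ else 0) (j k : ι) :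
    adjoint (S j) ∘L S k = if j = k then 1 else 0 := by
  ext1 f
  refine ext_inner_left ℂ fun g => ?_
  rw [comp_apply, adjoint_inner_right, horth]
  split_ifs <;> simp

theorem sum_comp_adjoint_eq_one_of_inner [Fintype ι]
    (horth : ∀ j k f g, ⟪S j f, S k g⟫_ℂ = if j = k then ⟪f, g⟫_ℂ else 0)
    (htotal : ∀ h : H, (∀ j g, ⟪S j g, h⟫_ℂ = 0) → h = 0) :
    ∑ j, S j ∘L adjoint (S j) = 1 := by
  ext1 f
  rw [sum_apply, one_apply_eq_self, ← sub_eq_zero]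
  refine htotal _ fun j g => ?_
  simp [horth, adjoint_inner_right]

end Cuntz

theorem cuntzRep_of_inner {N : ℕ} (S : Fin N → H →L[ℂ] H)
    (horth : ∀ j k f g, ⟪S j f, S k g⟫_ℂ = if j = k then ⟪f, g⟫_ℂ else 0)
    (htotal : ∀ h : H, (∀ j g, ⟪S j g, h⟫_ℂ = 0) → h = 0) :
    CuntzRep S :=
  ⟨adjoint_comp_eq_ite_of_inner S horth, sum_comp_adjoint_eq_one_of_inner S horth htotal⟩

theorem fourier_apply_add {T : ℝ} (n : ℤ) (x y : AddCircle T) :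
    fourier n (x + y) = fourier n x * fourier n y := by
  rw [fourier_apply, fourier_apply, fourier_apply, smul_add, toCircle_add, Circle.coe_mul]

theorem fourier_apply_nsmul_eq_pow {T : ℝ} (n : ℤ) (k : ℕ) (x : AddCircle T) :
    fourier n (k • x) = fourier n x ^ k := by
  rw [fourier_apply, fourier_apply, smul_comm, toCircle_nsmul, Circle.coe_pow]

theorem fourier_apply_nsmul {T : ℝ} (n : ℤ) (k : ℕ) (x : AddCircle T) :
    fourier n (k • x) = fourier (k * n) x := by
  rw [fourier_apply, fourier_apply, ← natCast_zsmul, smul_smul, mul_comm]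

theorem fourierCoeff_comp_add_right {T : ℝ} [Fact (0 < T)] {E : Type*} [NormedAddCommGroup E]
    [NormedSpace ℂ E] (f : AddCircle T → E) (c : AddCircle T) (n : ℤ) :
    fourierCoeff (fun x => f (x + c)) n = fourier n c • fourierCoeff f n := by
  have h := integral_add_right_eq_self (μ := haarAddCircle)
    (fun x => fourier (-n) (x - c) • f x) c
  simp only [add_sub_cancel_right] at h
  rw [fourierCoeff, fourierCoeff, h, ← integral_smul]
  refine integral_congr_ae (Filter.Eventually.of_forall fun x => ?_)
  dsimp only
  rw [sub_eq_add_neg, fourier_apply_add, smul_smul, mul_comm, fourier_apply (x := -c),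
    neg_smul_neg, ← fourier_apply]

theorem ae_eq_zero_of_fourierCoeff_eq_zero {T : ℝ} [Fact (0 < T)] {f : AddCircle T → ℂ}
    (hf : MemLp f 2 haarAddCircle) (h : ∀ n, fourierCoeff f n = 0) :
    f =ᵐ[haarAddCircle] 0 := by
  have hrepr : fourierBasis.repr (hf.toLp f) = 0 := by
    ext n
    rw [fourierBasis_repr, fourierCoeff_congr_ae hf.coeFn_toLp, h]
    rfl
  rw [fourierBasis.repr.map_eq_zero_iff] at hrepr
  exact hf.coeFn_toLp.symm.trans (by rw [hrepr]; exact Lp.coeFn_zero _ _ _)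

local notation "μ𝕋" => (haarAddCircle : Measure UnitAddCircle)

noncomputable section

def torsionPoint (N k : ℕ) : UnitAddCircle := ((k / N : ℝ) : UnitAddCircle)

variable {N : ℕ}

theorem torsionPoint_eq_nsmul (k : ℕ) : torsionPoint N k = k • torsionPoint N 1 := by
  rw [torsionPoint, torsionPoint, ← AddCircle.coe_nsmul, nsmul_eq_mul, Nat.cast_one, mul_one_div]

theorem nsmul_torsionPoint [NeZero N] (k : ℕ) : N • torsionPoint N k = 0 := by
  rw [torsionPoint, ← AddCircle.coe_nsmul, nsmul_eq_mul, mul_div_cancel₀ _ (NeZero.ne _),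
    AddCircle.coe_eq_zero_iff]
  exact ⟨k, by simp⟩

theorem dvd_of_fourier_torsionPoint_one_eq_one [NeZero N] {n : ℤ}
    (h : fourier n (torsionPoint N 1) = 1) : (N : ℤ) ∣ n := by
  rw [torsionPoint, fourier_coe_apply, Complex.exp_eq_one_iff] at h
  obtain ⟨q, hq⟩ := h
  refine ⟨q, ?_⟩
  have hN : (N : ℂ) ≠ 0 := NeZero.ne _
  push_cast at hq
  field_simp at hq
  exact_mod_cast hq

theorem sum_fourier_torsionPoint_eq_zero [NeZero N] {n : ℤ} (hn : ¬ (N : ℤ) ∣ n) :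
    ∑ l : Fin N, fourier n (torsionPoint N l) = 0 := by
  have hne : fourier n (torsionPoint N 1) ≠ 1 := mt dvd_of_fourier_torsionPoint_one_eq_one hn
  have hpow : fourier n (torsionPoint N 1) ^ N = 1 := by
    rw [← fourier_apply_nsmul_eq_pow, nsmul_torsionPoint, fourier_eval_zero]
  calc ∑ l : Fin N, fourier n (torsionPoint N l)
      = ∑ l ∈ Finset.range N, fourier n (torsionPoint N 1) ^ l := by
        rw [← Fin.sum_univ_eq_sum_range]
        exact Finset.sum_congr rfl fun l _ => by
          rw [torsionPoint_eq_nsmul, fourier_apply_nsmul_eq_pow]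
    _ = 0 := by rw [geom_sum_eq hne, hpow, sub_self, zero_div]

theorem measurePreserving_nsmul_haarAddCircle (N : ℕ) [NeZero N] :
    MeasurePreserving (fun x : UnitAddCircle => N • x) μ𝕋 μ𝕋 := by
  simpa using Measure.measurePreserving_zsmul μ𝕋 (n := N) (by exact_mod_cast NeZero.ne N)

theorem integral_comp_nsmul_haarAddCircle [NeZero N] {ψ : UnitAddCircle → ℂ}
    (hψ : AEStronglyMeasurable ψ μ𝕋) :
    ∫ x, ψ (N • x) ∂μ𝕋 = ∫ x, ψ x ∂μ𝕋 := by
  have h := measurePreserving_nsmul_haarAddCircle N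
  conv_rhs => rw [← h.map_eq]
  exact (integral_map h.measurable.aemeasurable (by rwa [h.map_eq])).symm

theorem integral_sum_torsion_translates (F : UnitAddCircle → ℂ) (hF : Integrable F μ𝕋) :
    ∫ x, ∑ l : Fin N, F (x + torsionPoint N l) ∂μ𝕋 = N * ∫ x, F x ∂μ𝕋 := by
  have hFl (l : Fin N) : Integrable (fun x => F (x + torsionPoint N l)) μ𝕋 :=
    (measurePreserving_add_right μ𝕋 _).integrable_comp_of_integrable hF
  rw [integral_finsetSum _ fun l _ => hFl l]
  simp [integral_add_right_eq_self]

theorem integral_mul_comp_nsmul [NeZero N] {φ ψ : UnitAddCircle → ℂ} (c : ℂ)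
    (hφ : MemLp φ ⊤ μ𝕋) (hψ : Integrable ψ μ𝕋)
    (hsum : ∀ᵐ x ∂μ𝕋, ∑ l : Fin N, φ (x + torsionPoint N l) = N * c) :
    ∫ x, φ x * ψ (N • x) ∂μ𝕋 = c * ∫ x, ψ x ∂μ𝕋 := by
  have hψN : Integrable (fun x => ψ (N • x)) μ𝕋 :=
    (measurePreserving_nsmul_haarAddCircle N).integrable_comp_of_integrable hψ
  have key := integral_sum_torsion_translates (N := N) _ (hψN.mul_of_top_right hφ)
  simp only [Pi.mul_apply, smul_add, nsmul_torsionPoint, add_zero, ← Finset.sum_mul] at key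
  rw [integral_congr_ae (hsum.mono fun x hx => by rw [hx]), integral_const_mul,
    integral_comp_nsmul_haarAddCircle hψ.aestronglyMeasurable] at key
  have hN : (N : ℂ) ≠ 0 := NeZero.ne _
  exact mul_left_cancel₀ hN (by linear_combination -key)

variable (N) in
def filterOperator [NeZero N] {m : UnitAddCircle → ℂ} (hm : MemLp m ⊤ μ𝕋) :
    Lp ℂ 2 μ𝕋 →L[ℂ] Lp ℂ 2 μ𝕋 :=
  (ContinuousLinearMap.mul ℂ ℂ).holderL μ𝕋 ⊤ 2 2 (hm.toLp m) ∘L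
    (Lp.compMeasurePreservingₗᵢ ℂ _ (measurePreserving_nsmul_haarAddCircle N)).toContinuousLinearMap

variable (N) in
theorem coeFn_filterOperator [NeZero N] {m : UnitAddCircle → ℂ} (hm : MemLp m ⊤ μ𝕋)
    (f : Lp ℂ 2 μ𝕋) :
    filterOperator N hm f =ᵐ[μ𝕋] fun x => m x * f (N • x) := by
  have hN := measurePreserving_nsmul_haarAddCircle N
  filter_upwards [(ContinuousLinearMap.mul ℂ ℂ).coeFn_holder (r := 2) (hm.toLp m)
      (Lp.compMeasurePreserving _ hN f), hm.coeFn_toLp, Lp.coeFn_compMeasurePreserving f hN]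
    with x h1 h2 h3
  rw [filterOperator, comp_apply]
  exact h1.trans (by rw [h2, h3]; rfl)

theorem inner_filterOperator [NeZero N] {m m' : UnitAddCircle → ℂ} (hm : MemLp m ⊤ μ𝕋)
    (hm' : MemLp m' ⊤ μ𝕋) (c : ℂ)
    (hsum : ∀ᵐ x ∂μ𝕋,
      ∑ l : Fin N, conj (m (x + torsionPoint N l)) * m' (x + torsionPoint N l) = N * c)
    (f g : Lp ℂ 2 μ𝕋) :
    ⟪filterOperator N hm f, filterOperator N hm' g⟫_ℂ = c * ⟪f, g⟫_ℂ := by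
  have hφ : MemLp (fun x => conj (m x) * m' x) ⊤ μ𝕋 := hm'.mul hm.star
  rw [L2.inner_def, L2.inner_def,
    ← integral_mul_comp_nsmul (N := N) c hφ (L2.integrable_inner f g) hsum]
  refine integral_congr_ae ?_
  filter_upwards [coeFn_filterOperator N hm f, coeFn_filterOperator N hm' g] with x hf hg
  simp only [hf, hg, RCLike.inner_apply', map_mul]
  ring

def filterMatrix (N : ℕ) (m : Fin N → UnitAddCircle → ℂ) (x : UnitAddCircle) :
    Matrix (Fin N) (Fin N) ℂ :=
  Matrix.of fun j k => ((Real.sqrt N : ℂ))⁻¹ * m j (x + torsionPoint N k)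

theorem filterMatrix_mul_conj_filterMatrix {m : Fin N → UnitAddCircle → ℂ} {x : UnitAddCircle}
    (j k l : Fin N) :
    filterMatrix N m x k l * conj (filterMatrix N m x j l) =
      (N : ℂ)⁻¹ * (conj (m j (x + torsionPoint N l)) * m k (x + torsionPoint N l)) := by
  have h : ((Real.sqrt N : ℂ))⁻¹ * ((Real.sqrt N : ℂ))⁻¹ = (N : ℂ)⁻¹ := by
    rw [← mul_inv, ← Complex.ofReal_mul, Real.mul_self_sqrt (Nat.cast_nonneg N),
      Complex.ofReal_natCast]
  simp only [filterMatrix, Matrix.of_apply, map_mul, map_inv₀, Complex.conj_ofReal]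
  linear_combination (conj (m j (x + torsionPoint N l)) * m k (x + torsionPoint N l)) * h

theorem sum_conj_mul_eq_of_filterMatrix_mem_unitaryGroup [NeZero N]
    {m : Fin N → UnitAddCircle → ℂ} {x : UnitAddCircle}
    (hU : filterMatrix N m x ∈ Matrix.unitaryGroup (Fin N) ℂ) (j k : Fin N) :
    ∑ l : Fin N, conj (m j (x + torsionPoint N l)) * m k (x + torsionPoint N l) =
      N * if j = k then 1 else 0 := by
  have h := congr_fun₂ (Matrix.mem_unitaryGroup_iff.mp hU) k j
  simp only [Matrix.mul_apply, Matrix.star_apply, RCLike.star_def,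
    filterMatrix_mul_conj_filterMatrix, ← Finset.mul_sum, Matrix.one_apply, eq_comm (a := k)] at h
  rw [← h, ← mul_assoc, mul_inv_cancel₀ (NeZero.ne _), one_mul]

theorem eq_zero_of_filterMatrix_mem_unitaryGroup [NeZero N]
    {m : Fin N → UnitAddCircle → ℂ} {x : UnitAddCircle}
    (hU : filterMatrix N m x ∈ Matrix.unitaryGroup (Fin N) ℂ) {h : UnitAddCircle → ℂ}
    (hh : ∀ j, ∑ l : Fin N, conj (m j (x + torsionPoint N l)) * h (x + torsionPoint N l) = 0) :
    h x = 0 := by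
  set u : Fin N → ℂ := fun l => h (x + torsionPoint N l)
  have hu : Matrix.vecMul u (star (filterMatrix N m x)) = 0 := by
    ext j
    calc ∑ l : Fin N, u l * conj (filterMatrix N m x j l)
        = conj ((Real.sqrt N : ℂ))⁻¹ * ∑ l : Fin N, conj (m j (x + torsionPoint N l)) * u l := by
          simp only [Finset.mul_sum, filterMatrix, Matrix.of_apply, map_mul, map_inv₀]
          exact Finset.sum_congr rfl fun l _ => by ring
      _ = 0 := by rw [hh, mul_zero]
  have hu0 : u = 0 := by
    rw [← Matrix.vecMul_one u, ← Matrix.mem_unitaryGroup_iff'.mp hU, ← Matrix.vecMul_vecMul, hu,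
      Matrix.zero_vecMul]
  simpa [u, torsionPoint] using congr_fun hu0 0

theorem fourierCoeff_sum_torsion_translates {w : UnitAddCircle → ℂ} (hw : Integrable w μ𝕋)
    (n : ℤ) :
    fourierCoeff (fun x => ∑ l : Fin N, w (x + torsionPoint N l)) n =
      (∑ l : Fin N, fourier n (torsionPoint N l)) * fourierCoeff w n := by
  have hwl (l : Fin N) : Integrable (fun x => w (x + torsionPoint N l)) μ𝕋 :=
    (measurePreserving_add_right μ𝕋 _).integrable_comp_of_integrable hw
  have h := congr_fun (fourierCoeff.sum Finset.univ _ fun l _ => hwl l) n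
  rw [Finset.sum_fn] at h
  simp only [h, Finset.sum_apply, fourierCoeff_comp_add_right, smul_eq_mul, Finset.sum_mul]

theorem sum_torsion_translates_ae_eq_zero [NeZero N] {w : UnitAddCircle → ℂ}
    (hw : MemLp w 2 μ𝕋) (h : ∀ q : ℤ, fourierCoeff w (N * q) = 0) :
    (fun x => ∑ l : Fin N, w (x + torsionPoint N l)) =ᵐ[μ𝕋] 0 := by
  refine ae_eq_zero_of_fourierCoeff_eq_zero (memLp_finsetSum _ fun l _ =>
    hw.comp_measurePreserving (measurePreserving_add_right μ𝕋 (torsionPoint N l))) fun n => ?_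
  rw [fourierCoeff_sum_torsion_translates (hw.integrable one_le_two)]
  by_cases hn : (N : ℤ) ∣ n
  · obtain ⟨q, rfl⟩ := hn
    rw [h, mul_zero]
  · rw [sum_fourier_torsionPoint_eq_zero hn, zero_mul]

theorem eq_zero_of_forall_inner_filterOperator_eq_zero [NeZero N]
    {m : Fin N → UnitAddCircle → ℂ} (hm : ∀ j, MemLp (m j) ⊤ μ𝕋)
    (hU : ∀ᵐ x ∂μ𝕋, filterMatrix N m x ∈ Matrix.unitaryGroup (Fin N) ℂ) (h : Lp ℂ 2 μ𝕋)
    (hh : ∀ j g, ⟪filterOperator N (hm j) g, h⟫_ℂ = 0) :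
    h = 0 := by
  have hcoeff (j : Fin N) (q : ℤ) : fourierCoeff (fun x => conj (m j x) * h x) (N * q) = 0 := by
    rw [← hh j (fourierLp 2 q), fourierCoeff, L2.inner_def]
    refine integral_congr_ae ?_
    filter_upwards [coeFn_filterOperator N (hm j) (fourierLp 2 q),
      (measurePreserving_nsmul_haarAddCircle N).quasiMeasurePreserving.ae_eq_comp
        (coeFn_fourierLp 2 q)] with x hS he
    simp only [hS, Function.comp_apply] at he ⊢
    rw [he, RCLike.inner_apply', smul_eq_mul, map_mul, fourier_apply_nsmul, fourier_neg]
    ring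
  have hsum (j : Fin N) := sum_torsion_translates_ae_eq_zero
    ((Lp.memLp h).mul (hm j).star) (hcoeff j)
  rw [Lp.eq_zero_iff_ae_eq_zero]
  filter_upwards [hU, ae_all_iff.mpr hsum] with x hx hsx
  exact eq_zero_of_filterMatrix_mem_unitaryGroup hx hsx

theorem inner_filterOperator_eq_ite [NeZero N] {m : Fin N → UnitAddCircle → ℂ}
    (hm : ∀ j, MemLp (m j) ⊤ μ𝕋)
    (hU : ∀ᵐ x ∂μ𝕋, filterMatrix N m x ∈ Matrix.unitaryGroup (Fin N) ℂ) (j k : Fin N)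
    (f g : Lp ℂ 2 μ𝕋) :
    ⟪filterOperator N (hm j) f, filterOperator N (hm k) g⟫_ℂ = if j = k then ⟪f, g⟫_ℂ else 0 := by
  rw [inner_filterOperator (hm j) (hm k) _
    (hU.mono fun x hx => sum_conj_mul_eq_of_filterMatrix_mem_unitaryGroup hx j k)]
  split_ifs <;> simp

theorem cuntzRep_filterOperator [NeZero N] {m : Fin N → UnitAddCircle → ℂ}
    (hm : ∀ j, MemLp (m j) ⊤ μ𝕋)
    (hU : ∀ᵐ x ∂μ𝕋, filterMatrix N m x ∈ Matrix.unitaryGroup (Fin N) ℂ) :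
    CuntzRep fun j => filterOperator N (hm j) :=
  cuntzRep_of_inner _ (inner_filterOperator_eq_ite hm hU)
    (eq_zero_of_forall_inner_filterOperator_eq_zero hm hU)

end

/-- Given essentially bounded filters `m_0, …, m_{N-1}` on the circle whose associated
`N×N` matrix is a.e. unitary, the operators `(S_j f)(x) = m_j(x) f(Nx)` are well-defined
bounded isometries on `L²(𝕋)` satisfying the Cuntz relations. -/
theorem stmt_16 {N : ℕ} (hN : 2 ≤ N) (m : Fin N → UnitAddCircle → ℂ)
    (hm : ∀ j, MemLp (m j) ⊤ (haarAddCircle : Measure UnitAddCircle))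
    (hunitary : ∀ᵐ x ∂(haarAddCircle : Measure UnitAddCircle),
      (Matrix.of fun j k : Fin N =>
          ((Real.sqrt N : ℂ))⁻¹ * m j (x + ((((k : ℕ) : ℝ) / (N : ℝ) : ℝ) : UnitAddCircle)))
        ∈ Matrix.unitaryGroup (Fin N) ℂ) :
    ∃ S : Fin N →
        (Lp ℂ 2 (haarAddCircle : Measure UnitAddCircle) →L[ℂ]
          Lp ℂ 2 (haarAddCircle : Measure UnitAddCircle)),
      (∀ (j : Fin N) (g : Lp ℂ 2 (haarAddCircle : Measure UnitAddCircle)),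
        ⇑(S j g) =ᵐ[(haarAddCircle : Measure UnitAddCircle)]
          fun x => m j x * g (N • x)) ∧
      (∀ j : Fin N, Isometry (S j)) ∧ CuntzRep S := by
  have : NeZero N := ⟨by omega⟩
  have hcuntz := cuntzRep_filterOperator hm hunitary
  refine ⟨fun j => filterOperator N (hm j), fun j => coeFn_filterOperator N (hm j), fun j => ?_,
    hcuntz⟩
  rw [isometry_iff_adjoint_comp_self, hcuntz.1 j j, if_pos rfl]
end
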